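/- arXiv:1707.03620 — 3 statements merged into one kernel-verified Lean document; each statement's English description precedes it below -/
import Mathlib

section
/- A stationary subset S of ω₁ contains, for every countable ordinal α, a closed subset of order type α. -/
open Cardinal Set

noncomputable def omega1 : Ordinal := (Cardinal.aleph 1).ord

/-- `C` is closed in `κ`: closed under suprema of bounded nonempty subsets. -/
def IsClosedIn (C : Set Ordinal) (k : Ordinal) : Prop :=
  ∀ s : Set Ordinal, s ⊆ C → s.Nonempty → sSup s < k → sSup s ∈ C

/-- `C` is unbounded in `κ`. -/
def IsUnboundedIn (C : Set Ordinal) (k : Ordinal) : Prop :=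
  ∀ a < k, ∃ b ∈ C, a ≤ b ∧ b < k

/-- `C` is a club subset of `κ`. -/
def IsClubIn (C : Set Ordinal) (k : Ordinal) : Prop :=
  C ⊆ Set.Iio k ∧ IsClosedIn C k ∧ IsUnboundedIn C k

/-- `S` is a stationary subset of `κ`: it meets every club. -/
def IsStationaryIn (S : Set Ordinal) (k : Ordinal) : Prop :=
  S ⊆ Set.Iio k ∧ ∀ C, IsClubIn C k → (S ∩ C).Nonempty

/-- The club filter on `κ`: subsets of `κ` containing a club. -/
def clubFilter (k : Ordinal) : Set (Set Ordinal) :=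
  {X | X ⊆ Set.Iio k ∧ ∃ C, IsClubIn C k ∧ C ⊆ X}
/-- `C` is closed under suprema of its nonempty subsets that are bounded by an
element of `C`. -/
def IsClosedSub (C : Set Ordinal) : Prop :=
  ∀ s ⊆ C, s.Nonempty → (∃ b ∈ C, ∀ x ∈ s, x ≤ b) → sSup s ∈ C

/-!
By induction on `α < ω₁`: above every `γ < ω₁`, `S` has a bounded closed subset of order type at
least `α`. At a successor, put one more point of `S` on top. At a limit `α`, the `δ < ω₁` that
bound such copies (for all `β < α`) starting anywhere below `δ` form a club, so `S` contains such a
limit `δ`; copies for cofinally many `β < α`, strung along a sequence converging to `δ`, together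
with `δ` itself form a closed set of type at least `α`. Finally, a closed set of type `> α` has an
initial segment of type exactly `α`, and that segment is closed below each of its points.
-/

open Order Ordinal

universe u v

lemma countable_Iio_of_lt_omega_one {δ : Ordinal.{u}} (hδ : δ < ω₁) : (Iio δ).Countable := by
  rw [← Cardinal.ord_aleph, Cardinal.lt_ord, Cardinal.lt_aleph_one_iff] at hδ
  rw [← Cardinal.le_aleph0_iff_set_countable, Cardinal.mk_Iio_ordinal, Cardinal.lift_le_aleph0]
  exact hδ

lemma exists_monotone_nat_cofinal {δ : Ordinal.{u}} (hlim : IsSuccLimit δ) (hδ : δ < ω₁) :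
    ∃ e : ℕ → Ordinal, Monotone e ∧ (∀ n, e n < δ) ∧ ∀ x < δ, ∃ n, x < e n := by
  obtain ⟨f, hf⟩ :=
    exists_isFundamentalSeq (congrArg Cardinal.ord (cof_eq_aleph0_of_isSuccLimit hlim hδ))
  refine ⟨fun n => f ⟨n, by simp⟩, fun m n hmn => hf.strictMono.monotone (by simpa using hmn),
    fun n => (f _).2, fun x hx => ?_⟩
  obtain ⟨_, ⟨i, rfl⟩, hi⟩ := hf.isCofinal_range ⟨succ x, hlim.succ_lt hx⟩
  obtain ⟨n, hn⟩ := lt_omega0.1 (by simpa using i.2)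
  obtain rfl : i = ⟨n, by simp⟩ := Subtype.ext hn
  exact ⟨n, (lt_succ x).trans_le hi⟩

lemma isClosed_insert_iUnion {X : Type*} [LinearOrder X] [TopologicalSpace X] [OrderTopology X]
    {K : ℕ → Set X} {e : ℕ → X} {δ : X} (he : Monotone e) (hcof : ∀ x < δ, ∃ n, x < e n)
    (hK : ∀ n, IsClosed (K n)) (hKe : ∀ n, K n ⊆ Ioo (e n) δ) :
    IsClosed (insert δ (⋃ n, K n)) := by
  refine isClosed_of_closure_subset fun x hx => ?_
  rw [insert_eq, closure_union, closure_singleton] at hx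
  rcases hx with rfl | hx
  · exact mem_insert _ _
  have hxδ : x ≤ δ := closure_minimal (iUnion_subset fun n y hy => (hKe n hy).2.le) isClosed_Iic hx
  rcases hxδ.eq_or_lt with rfl | hxδ
  · exact mem_insert _ _
  obtain ⟨m, hm⟩ := hcof x hxδ
  have hfinite : Iio (e m) ∩ ⋃ n, K n ⊆ ⋃ n ∈ Finset.range m, K n := by
    rintro y ⟨hym, hy⟩
    obtain ⟨n, hn⟩ := mem_iUnion.1 hy
    have hnm : n < m := by
      by_contra! hmn
      exact (hym.trans_le (he hmn)).not_gt (hKe n hn).1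
    exact mem_biUnion (Finset.mem_range.2 hnm) hn
  have hx' := closure_mono hfinite (isOpen_Iio.inter_closure ⟨hm, hx⟩)
  rw [(isClosed_biUnion_finset fun n _ => hK n).closure_eq] at hx'
  obtain ⟨n, -, hn⟩ := mem_iUnion₂.1 hx'
  exact mem_insert_of_mem _ (mem_iUnion_of_mem n hn)

lemma IsClosed.isClosedSub_inter_Iio {K : Set Ordinal.{u}} (hK : IsClosed K) (c : Ordinal.{u}) :
    IsClosedSub (K ∩ Iio c) := by
  rintro t ht hne ⟨b, hb, htb⟩
  have hsup : sSup t ≤ b := csSup_le hne htb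
  exact ⟨hK.closure_subset_iff.2 (ht.trans inter_subset_left) (csSup_mem_closure hne ⟨b, htb⟩),
    hsup.trans_lt hb.2⟩

section OrderType

variable {X : Type*} [LinearOrder X] [WellFoundedLT X]

lemma typein_eq_type_inter_Iio {K : Set X} (c : K) :
    typein (α := K) (· < ·) c = typeLT ↑(K ∩ Iio c.1) :=
  (type_Iio_lt c).symm.trans <| RelIso.ordinalType_congr <| OrderIso.toRelIsoLT
    { toFun := fun y => ⟨y.1.1, y.1.2, y.2⟩
      invFun := fun y => ⟨⟨y.1, y.2.1⟩, y.2.2⟩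
      left_inv := fun _ => rfl
      right_inv := fun _ => rfl
      map_rel_iff' := Iff.rfl }

lemma type_lt_type_insert {K : Set X} {x : X} (hx : ∀ y ∈ K, y < x) :
    typeLT K < typeLT ↑(insert x K) := by
  have hK : insert x K ∩ Iio x = K := by
    ext y
    exact ⟨fun ⟨hy, hyx⟩ => hy.resolve_left hyx.ne, fun hy => ⟨Or.inr hy, hx y hy⟩⟩
  have := typein_lt_type (α := ↑(insert x K)) (· < ·) ⟨x, mem_insert x K⟩
  rwa [typein_eq_type_inter_Iio, hK] at this

end OrderType

lemma IsClosed.exists_isClosedSub_orderIso_Iio {K : Set Ordinal.{u}} (hK : IsClosed K)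
    {α : Ordinal.{u}} (hα : lift.{u + 1} α < typeLT K) :
    ∃ C ⊆ K, IsClosedSub C ∧ Nonempty (Iio α ≃o C) := by
  obtain ⟨c, hc⟩ := typein_surj (α := K) (· < ·) hα
  have h : typeLT (Iio α) = typeLT ↑(K ∩ Iio c.1) := by
    rw [type_lt_Iio, ← typein_eq_type_inter_Iio, hc]
  exact ⟨K ∩ Iio c.1, inter_subset_left, hK.isClosedSub_inter_Iio c,
    ⟨OrderIso.ofRelIsoLT (type_eq.1 h).some⟩⟩

lemma isClubIn_setOf_forall_lt {κ : Cardinal.{u}} (hκ : κ.IsRegular) (hκ₀ : κ ≠ ℵ₀)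
    {f : Ordinal.{u} → Ordinal.{u}} (hf : ∀ γ < κ.ord, f γ < κ.ord) :
    IsClubIn {δ | δ < κ.ord ∧ ∀ γ < δ, f γ < δ} κ.ord := by
  refine ⟨fun δ hδ => hδ.1, fun s hs hne hlt => ⟨hlt, fun γ hγ => ?_⟩, fun a ha => ?_⟩
  · have hbdd : BddAbove s := ⟨κ.ord, fun δ hδ => (hs hδ).1.le⟩
    obtain ⟨δ, hδs, hγδ⟩ := (lt_csSup_iff hbdd hne).1 hγ
    exact ((hs hδs).2 γ hγδ).trans_le (le_csSup hbdd hδs)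
  -- `F y` strictly bounds `f` on `Iio y`, so each fixed point `nfp F a` is closed under `f`.
  set F : Ordinal.{u} → Ordinal.{u} := fun y => ⨆ γ : Iio y, succ (f γ)
  have hF : ∀ y < κ.ord, F y < κ.ord := fun y hy => by
    refine lift_iSup_lt_of_lt_cof ?_ fun γ =>
      (isSuccLimit_ord hκ.aleph0_le).succ_lt (hf γ (γ.2.trans hy))
    rw [Cardinal.mk_Iio_ordinal, ← lift_cof, hκ.cof_ord]
    simpa [Cardinal.lift_lift, ← Ordinal.lift_card] using Cardinal.lt_ord.1 hy
  refine ⟨nfp F a, ⟨nfp_lt_ord_of_isRegular hκ hκ₀ hF ha, fun γ hγ => ?_⟩, le_nfp F a,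
    nfp_lt_ord_of_isRegular hκ hκ₀ hF ha⟩
  obtain ⟨n, hn⟩ := lt_nfp_iff.1 hγ
  calc f γ < succ (f γ) := lt_succ _
    _ ≤ F (F^[n] a) := Ordinal.le_iSup (fun γ : Iio (F^[n] a) => succ (f γ)) ⟨γ, hn⟩
    _ = F^[n + 1] a := (Function.iterate_succ_apply' F n a).symm
    _ ≤ nfp F a := iterate_le_nfp F a (n + 1)

lemma IsClubIn.inter_Ioi {C : Set Ordinal.{u}} {k γ : Ordinal.{u}} (hC : IsClubIn C k)
    (hk : IsSuccLimit k) (hγ : γ < k) : IsClubIn (C ∩ Ioi γ) k := by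
  refine ⟨fun x hx => hC.1 hx.1, fun s hs hne hlt => ⟨hC.2.1 s (fun x hx => (hs hx).1) hne hlt, ?_⟩,
    fun a ha => ?_⟩
  · obtain ⟨x, hx⟩ := hne
    exact (hs hx).2.trans_le (le_csSup ⟨k, fun y hy => (hC.1 (hs hy).1).le⟩ hx)
  · obtain ⟨b, hb, hab, hbk⟩ := hC.2.2 (max a (succ γ)) (max_lt ha (hk.succ_lt hγ))
    exact ⟨b, ⟨hb, succ_le_iff.1 (le_of_max_le_right hab)⟩, le_of_max_le_left hab, hbk⟩

lemma IsStationaryIn.exists_mem_club_gt {S C : Set Ordinal.{u}} {k γ : Ordinal.{u}}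
    (hS : IsStationaryIn S k) (hk : IsSuccLimit k) (hC : IsClubIn C k) (hγ : γ < k) :
    ∃ δ ∈ S ∩ C, γ < δ := by
  obtain ⟨δ, hδS, hδC, hγδ⟩ := hS.2 _ (hC.inter_Ioi hk hγ)
  exact ⟨δ, ⟨hδS, hδC⟩, hγδ⟩

lemma isClubIn_Iio (k : Ordinal.{u}) : IsClubIn (Iio k) k :=
  ⟨subset_rfl, fun _ _ _ hlt => hlt, fun a ha => ⟨a, ha, le_rfl, ha⟩⟩

def HasClosedSubsetOfTypeGE (T : Set Ordinal.{u}) (β : Ordinal.{u}) : Prop :=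
  ∃ K ⊆ T, IsClosed K ∧ lift.{u + 1} β ≤ typeLT K

lemma HasClosedSubsetOfTypeGE.mono {T T' : Set Ordinal.{u}} {β : Ordinal.{u}}
    (h : HasClosedSubsetOfTypeGE T β) (hT : T ⊆ T') : HasClosedSubsetOfTypeGE T' β :=
  let ⟨K, hKT, hK, hβ⟩ := h
  ⟨K, hKT.trans hT, hK, hβ⟩

def HasClosedCopiesAbove (S : Set Ordinal.{u}) (β : Ordinal.{u}) : Prop :=
  ∀ γ < ω₁, ∃ η < ω₁, HasClosedSubsetOfTypeGE (S ∩ Ioo γ η) β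

section

variable {S : Set Ordinal.{u}}

lemma IsStationaryIn.hasClosedCopiesAbove_succ (hS : IsStationaryIn S ω₁) {β : Ordinal.{u}}
    (h : HasClosedCopiesAbove S β) : HasClosedCopiesAbove S (succ β) := by
  intro γ hγ
  obtain ⟨η, hη, K, hKS, hK, hβK⟩ := h γ hγ
  obtain ⟨x, ⟨hxS, -⟩, hx⟩ :=
    hS.exists_mem_club_gt (isSuccLimit_omega 1) (isClubIn_Iio _) (max_lt hγ hη)
  have hγx : γ < x := (le_max_left γ η).trans_lt hx
  have hKx : ∀ y ∈ K, y < x := fun y hy => ((hKS hy).2.2.trans_le (le_max_right γ η)).trans hx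
  refine ⟨succ x, (isSuccLimit_omega 1).succ_lt (hS.1 hxS), insert x K, ?_,
    by rw [insert_eq]; exact isClosed_singleton.union hK, ?_⟩
  · rintro y (rfl | hy)
    · exact ⟨hxS, hγx, lt_succ y⟩
    · exact ⟨(hKS hy).1, (hKS hy).2.1, (hKx y hy).trans (lt_succ x)⟩
  · rw [Ordinal.lift_succ]
    exact succ_le_of_lt (hβK.trans_lt (type_lt_type_insert hKx))

lemma IsStationaryIn.exists_isSuccLimit_closed_under {ι : Type*} [Countable ι]
    (hS : IsStationaryIn S ω₁) {η : ι → Ordinal.{u} → Ordinal.{u}}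
    (hη : ∀ i, ∀ γ < ω₁, η i γ < ω₁) {γ₀ : Ordinal.{u}} (hγ₀ : γ₀ < ω₁) :
    ∃ δ ∈ S, γ₀ < δ ∧ δ < ω₁ ∧ IsSuccLimit δ ∧ ∀ i, ∀ γ < δ, η i γ < δ := by
  -- the `succ γ` term makes every nonzero closure point of `f` a limit
  set f : Ordinal.{u} → Ordinal.{u} := fun γ => max (succ γ) (⨆ i, η i γ)
  have hf : ∀ γ < ω₁, f γ < ω₁ := fun γ hγ =>
    max_lt ((isSuccLimit_omega 1).succ_lt hγ) (iSup_lt_omega_one fun i => hη i γ hγ)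
  have hclub := isClubIn_setOf_forall_lt Cardinal.isRegular_aleph_one
    Cardinal.aleph0_lt_aleph_one.ne' (f := f) (by rwa [Cardinal.ord_aleph])
  rw [Cardinal.ord_aleph] at hclub
  obtain ⟨δ, ⟨hδS, hδ₁, hδf⟩, hγ₀δ⟩ := hS.exists_mem_club_gt (isSuccLimit_omega 1) hclub hγ₀
  refine ⟨δ, hδS, hγ₀δ, hδ₁, isSuccLimit_iff.2 ⟨(zero_le.trans_lt hγ₀δ).ne',
    isSuccPrelimit_iff_succ_lt.2 fun γ hγ => (le_max_left _ _).trans_lt (hδf γ hγ)⟩,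
    fun i γ hγ => ?_⟩
  exact ((Ordinal.le_iSup (fun i => η i γ) i).trans (le_max_right _ _)).trans_lt (hδf γ hγ)

lemma IsStationaryIn.hasClosedCopiesAbove_of_isSuccLimit (hS : IsStationaryIn S ω₁)
    {α : Ordinal.{u}} (hα : IsSuccLimit α) (hα₁ : α < ω₁)
    (IH : ∀ β < α, HasClosedCopiesAbove S β) : HasClosedCopiesAbove S α := by
  intro γ₀ hγ₀
  choose! η hη₁ hη using IH
  have : Countable (Iio α) := (countable_Iio_of_lt_omega_one hα₁).to_subtype
  obtain ⟨δ, hδS, hγ₀δ, hδ₁, hδ, hηδ⟩ := hS.exists_isSuccLimit_closed_under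
    (η := fun β : Iio α => η β) (fun β => hη₁ β β.2) hγ₀
  obtain ⟨e, he, heδ, hcof⟩ := exists_monotone_nat_cofinal hδ hδ₁
  have : Nonempty (Iio α) := ⟨⟨0, hα.bot_lt⟩⟩
  obtain ⟨b, hb⟩ := exists_surjective_nat (Iio α)
  have hK : ∀ n, HasClosedSubsetOfTypeGE (S ∩ Ioo (max γ₀ (e n)) δ) (b n) := fun n =>
    (hη (b n) (b n).2 _ (max_lt hγ₀ ((heδ n).trans hδ₁))).mono
      (inter_subset_inter_right _ (Ioo_subset_Ioo_right (hηδ (b n) _ (max_lt hγ₀δ (heδ n))).le))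
  choose K hKS hKc hKb using hK
  refine ⟨succ δ, (isSuccLimit_omega 1).succ_lt hδ₁, insert δ (⋃ n, K n), ?_,
    isClosed_insert_iUnion (fun m n hmn => max_le_max_left γ₀ (he hmn))
      (fun x hx => (hcof x hx).imp fun n hn => hn.trans_le (le_max_right _ _)) hKc
      (fun n => (hKS n).trans inter_subset_right), ?_⟩
  · rintro y (rfl | hy)
    · exact ⟨hδS, hγ₀δ, lt_succ y⟩
    · obtain ⟨n, hn⟩ := mem_iUnion.1 hy
      obtain ⟨hyS, hy₁, hy₂⟩ := hKS n hn
      exact ⟨hyS, (le_max_left _ _).trans_lt hy₁, hy₂.trans (lt_succ δ)⟩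
  · refine le_of_forall_lt fun c hc => ?_
    obtain ⟨β, hβ, rfl⟩ := lt_lift_iff.1 hc
    obtain ⟨n, hn⟩ := hb ⟨succ β, hα.succ_lt hβ⟩
    calc lift.{u + 1} β < lift.{u + 1} (b n) := by rw [hn]; exact Ordinal.lift_lt.2 (lt_succ β)
      _ ≤ typeLT (K n) := hKb n
      _ ≤ _ := type_mono ((subset_iUnion K n).trans (subset_insert _ _))

lemma IsStationaryIn.hasClosedCopiesAbove (hS : IsStationaryIn S ω₁) {α : Ordinal.{u}}
    (hα : α < ω₁) : HasClosedCopiesAbove S α := by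
  induction α using WellFoundedLT.induction with
  | _ α IH =>
  rcases zero_or_succ_or_isSuccLimit α with rfl | ⟨β, rfl⟩ | hlim
  · exact fun γ hγ => ⟨γ, hγ, ∅, empty_subset _, isClosed_empty, by simp⟩
  · exact hS.hasClosedCopiesAbove_succ (IH β (lt_succ β) ((lt_succ β).trans hα))
  · exact hS.hasClosedCopiesAbove_of_isSuccLimit hlim hα fun β hβ => IH β hβ (hβ.trans hα)

end

lemma exists_orderIso_Iio_of_lt_omega_one {α : Ordinal.{v}} (hα : α < ω₁) :
    ∃ α' : Ordinal.{u}, α' < ω₁ ∧ Nonempty (Iio α ≃o Iio α') := by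
  obtain ⟨α', hα'⟩ := mem_range_lift_of_le (a := (ω₁ : Ordinal.{u})) (b := lift.{u} α) <| by
    rw [lift_omega, Ordinal.lift_one]
    exact lift_le_omega_one.2 hα.le
  refine ⟨α', by rwa [← lift_lt_omega_one.{u, v}, hα', lift_lt_omega_one], ?_⟩
  have hlift := congrArg Ordinal.lift.{max (u + 1) (v + 1), max u v} hα'
  simp only [Ordinal.lift_lift] at hlift
  have h := lift_type_eq.{v + 1, u + 1, 0}.1 (by simpa using hlift.symm :
    lift.{u + 1} (typeLT (Iio α)) = lift.{v + 1} (typeLT (Iio α')))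
  exact ⟨OrderIso.ofRelIsoLT h.some⟩

/-- A stationary subset S of ω₁ contains, for every countable ordinal α, a closed
subset of order type α. -/
theorem stmt8 (S : Set Ordinal) (hS : IsStationaryIn S omega1)
    (α : Ordinal) (hα : α < omega1) :
    ∃ C : Set Ordinal, C ⊆ S ∧ IsClosedSub C ∧ Nonempty (Set.Iio α ≃o C) := by
  rw [omega1, Cardinal.ord_aleph] at hS hα
  -- `α` and `S` may live in different universes
  obtain ⟨α', hα', ⟨e⟩⟩ := exists_orderIso_Iio_of_lt_omega_one hα
  obtain ⟨η, -, K, hKS, hK, hαK⟩ :=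
    hS.hasClosedCopiesAbove ((isSuccLimit_omega 1).succ_lt hα') 0 (isSuccLimit_omega 1).bot_lt
  rw [Ordinal.lift_succ, succ_le_iff] at hαK
  obtain ⟨C, hCK, hC, ⟨e'⟩⟩ := hK.exists_isClosedSub_orderIso_Iio hαK
  exact ⟨C, hCK.trans (hKS.trans inter_subset_left), hC, ⟨e.trans e'⟩⟩
end

section
/- An arbitrary product (with any support) of weakly homogeneous partial orders, where the support of a condition is preserved by applying automorphisms coordinatewise, is weakly homogeneous. -/
/-- A partial order is weakly homogeneous if any two conditions can be made
compatible by an automorphism. -/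
def WeaklyHomogeneous (P : Type*) [PartialOrder P] : Prop :=
  ∀ p q : P, ∃ π : P ≃o P, ∃ r, r ≤ π p ∧ r ≤ q

/-- An arbitrary product (with any support ideal `J`) of weakly homogeneous partial
orders, where supports are preserved by applying automorphisms coordinatewise, is
weakly homogeneous.  Conditions are functions `p` with `p i ∈ P i` whose support
`{i | p i ≠ ⊤}` lies in the ideal `J`, ordered coordinatewise. -/
theorem stmt12 {ι : Type*} (P : ι → Type*) [∀ i, PartialOrder (P i)]
    [∀ i, OrderTop (P i)]
    (J : Set (Set ι))
    (Jdown : ∀ {A B : Set ι}, A ∈ J → B ⊆ A → B ∈ J)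
    (Junion : ∀ {A B : Set ι}, A ∈ J → B ∈ J → A ∪ B ∈ J)
    (hhom : ∀ i, WeaklyHomogeneous (P i))
    (hpres : ∀ (π : ∀ i, P i ≃o P i) (p : ∀ i, P i),
      {i | p i ≠ ⊤} ∈ J → {i | π i (p i) ≠ ⊤} ∈ J) :
    WeaklyHomogeneous {p : ∀ i, P i // {i | p i ≠ ⊤} ∈ J} := by
  classical
  intro p q
  choose π0 r0 hr1 hr2 using fun i => hhom i (p.1 i) (q.1 i)
  set π : ∀ i, P i ≃o P i :=
    fun i => if p.1 i = ⊤ ∧ q.1 i = ⊤ then OrderIso.refl _ else π0 i with hπ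
  set r : ∀ i, P i := fun i => if p.1 i = ⊤ ∧ q.1 i = ⊤ then ⊤ else r0 i with hrdef
  have hr : {i | r i ≠ ⊤} ∈ J := by
    refine Jdown (Junion p.2 q.2) ?_
    intro i hi
    by_contra h
    simp only [Set.mem_union, Set.mem_setOf_eq, not_or, not_not] at h
    simp only [Set.mem_setOf_eq, hrdef, if_pos h] at hi
    exact hi rfl
  refine ⟨⟨⟨fun x => ⟨fun i => π i (x.1 i), hpres π x.1 x.2⟩,
      fun x => ⟨fun i => (π i).symm (x.1 i), hpres (fun i => (π i).symm) x.1 x.2⟩,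
      ?_, ?_⟩, ?_⟩, ⟨r, hr⟩, ?_, ?_⟩
  · intro x; ext i; simp
  · intro x; ext i; simp
  · intro x y
    constructor
    · intro h i
      have := h i
      simpa using this
    · intro h i
      simpa using (π i).monotone (h i)
  · intro i
    show r i ≤ π i (p.1 i)
    by_cases h : p.1 i = ⊤ ∧ q.1 i = ⊤
    · simp [hrdef, hπ, if_pos h, h.1]
    · simpa [hrdef, hπ, if_neg h] using hr1 i
  · intro i
    show r i ≤ q.1 i
    by_cases h : p.1 i = ⊤ ∧ q.1 i = ⊤
    · simp [hrdef, if_pos h, h.2]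
    · simpa [hrdef, if_neg h] using hr2 i
end

section
/- The Levy collapse Coll(ω, <κ) has the κ-chain condition when κ is regular and inaccessible: every antichain has size less than κ. -/
universe u

/-- A Levy collapse condition over the type `κ.ord.ToType` of ordinals below κ:
a finite partial function on `κ × ω` (coded as a functional finite set of pairs
`((α, n), β)`) with `p (α, n) = β < α`. -/
def IsLevyCond (κ : Cardinal.{u})
    (p : Finset ((κ.ord.ToType × ℕ) × κ.ord.ToType)) : Prop :=
  (∀ x ∈ p, ∀ y ∈ p,
    (x : (κ.ord.ToType × ℕ) × κ.ord.ToType).1 = y.1 → x = y) ∧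
  (∀ x ∈ p, (x : (κ.ord.ToType × ℕ) × κ.ord.ToType).2 < x.1.1)

/-- The Levy collapse `Coll(ω, <κ)`. -/
def LevyColl (κ : Cardinal.{u}) :=
  {p : Finset ((κ.ord.ToType × ℕ) × κ.ord.ToType) // IsLevyCond κ p}

/-- Ordered by reverse inclusion. -/
instance (κ : Cardinal.{u}) : PartialOrder (LevyColl κ) where
  le p q := q.1 ⊆ p.1
  le_refl p := Finset.Subset.refl _
  le_trans p q r h1 h2 := Finset.Subset.trans h2 h1
  le_antisymm p q h1 h2 := Subtype.ext (Finset.Subset.antisymm h2 h1)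


/-!
By the Δ-system lemma, `κ` members of an antichain of size `κ` have domains forming a Δ-system
with some finite root `R`. The restriction of a condition to `R` is a finite subset of
`⋃ (α, n) ∈ R, {(α, n)} × α`, a set of size `< κ` by regularity, so there are fewer than `κ`
such restrictions. Two of the conditions therefore agree on `R`, the only place their domains
meet, and their union is a common extension.
-/

open Cardinal Set

namespace Cardinal

variable {κ : Cardinal.{u}} {ι α : Type u}

/-- Take `M` maximal by Zorn. If `M` were small, so would be `M` together with the elements
unrelated to some member of `M`, and any element of `S` outside that set would extend `M`. -/
theorem exists_subset_pairwise_of_mk_setOf_not_lt (hκ : κ.IsRegular) {r : ι → ι → Prop}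
    [Std.Symm r] {S : Set ι} (hS : κ ≤ #S) (hsmall : ∀ i ∈ S, #{j ∈ S | ¬ r i j} < κ) :
    ∃ T ⊆ S, κ ≤ #T ∧ T.Pairwise r := by
  obtain ⟨M, hM⟩ := zorn_subset {T | T ⊆ S ∧ T.Pairwise r} fun c hc hchain =>
    ⟨⋃₀ c, ⟨sUnion_subset fun T hT => (hc hT).1, hchain.pairwise_sUnion.2 fun T hT => (hc hT).2⟩,
      fun _ => subset_sUnion_of_mem⟩
  refine ⟨M, hM.prop.1, not_lt.1 fun hMκ => ?_, hM.prop.2⟩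
  set B := M ∪ ⋃ i ∈ M, {j ∈ S | ¬ r i j}
  have hB : #B < κ :=
    (mk_union_le _ _).trans_lt <| add_lt_of_lt hκ.aleph0_le hMκ <|
      (card_biUnion_lt_iff_forall_of_isRegular hκ hMκ).2 fun i hi => hsmall i (hM.prop.1 hi)
  obtain ⟨j, hjS, hjB⟩ : ∃ j ∈ S, j ∉ B :=
    not_subset.1 fun hSB => (hS.trans (mk_le_mk_of_subset hSB)).not_gt hB
  have hjM : j ∈ M := by
    refine hM.mem_of_prop_insert ⟨insert_subset hjS hM.prop.1, ?_⟩
    refine pairwise_insert_of_symm.2 ⟨hM.prop.2, fun i hi _ => symm ?_⟩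
    by_contra hij
    exact hjB (Or.inr (mem_biUnion hi ⟨hjS, hij⟩))
  exact hjB (Or.inl hjM)

theorem mk_setOf_finset_coe_subset_lt (hκ : ℵ₀ ≤ κ) {X : Set α} (hX : #X < κ) :
    #{s : Finset α | ↑s ⊆ X} < κ := by
  classical
  have hinj : Function.Injective fun s : {s : Finset α | ↑s ⊆ X} => s.1.subtype (· ∈ X) := by
    intro s t hst
    ext1
    rw [← Finset.subtype_map_of_mem fun x hx => s.2 hx,
      ← Finset.subtype_map_of_mem fun x hx => t.2 hx]
    exact congrArg _ hst
  refine (mk_le_of_injective hinj).trans_lt ?_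
  rcases finite_or_infinite X with hfin | hinf
  · exact (lt_aleph0_of_finite _).trans_le hκ
  · rwa [mk_finset_of_infinite]

variable [DecidableEq α]

theorem exists_delta_system_of_card_le (hκ : κ.IsRegular) (n : ℕ) (F : ι → Finset α) {S : Set ι}
    (hS : κ ≤ #S) (hF : ∀ i ∈ S, (F i).card ≤ n) :
    ∃ T ⊆ S, ∃ R, κ ≤ #T ∧ T.Pairwise fun i j => F i ∩ F j = R := by
  induction n generalizing F S with
  | zero =>
    refine ⟨S, subset_rfl, ∅, hS, fun i hi j _ _ => ?_⟩
    show F i ∩ F j = ∅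
    rw [Finset.card_eq_zero.1 (Nat.le_zero.1 (hF i hi)), Finset.empty_inter]
  | succ n ih =>
    -- Either some point lies in `κ` of the sets and joins the root, or `κ` of them are disjoint.
    by_cases hpopular : ∃ x, κ ≤ #{i ∈ S | x ∈ F i}
    · obtain ⟨x, hx⟩ := hpopular
      obtain ⟨T, hTS, R, hT, hR⟩ := ih (fun i => (F i).erase x) hx fun i hi => by
        rw [Finset.card_erase_of_mem hi.2]; have := hF i hi.1; omega
      refine ⟨T, hTS.trans (sep_subset _ _), insert x R, hT, fun i hi j hj hij => ?_⟩
      have hxij : x ∈ F i ∩ F j := Finset.mem_inter.2 ⟨(hTS hi).2, (hTS hj).2⟩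
      rw [← hR hi hj hij, Finset.erase_inter, Finset.inter_erase, Finset.erase_idem,
        Finset.insert_erase hxij]
    · push Not at hpopular
      have : Std.Symm fun i j => F i ∩ F j = ∅ := ⟨fun i j h => by rwa [Finset.inter_comm]⟩
      obtain ⟨T, hTS, hT, hdisj⟩ := exists_subset_pairwise_of_mk_setOf_not_lt hκ hS fun i _ => by
        have hsub : {j ∈ S | ¬ F i ∩ F j = ∅} ⊆ ⋃ x ∈ (F i : Set α), {j ∈ S | x ∈ F j} := by
          rintro j ⟨hjS, hij⟩
          obtain ⟨x, hx⟩ := Finset.nonempty_iff_ne_empty.2 hij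
          exact mem_biUnion (Finset.mem_inter.1 hx).1 ⟨hjS, (Finset.mem_inter.1 hx).2⟩
        refine (mk_le_mk_of_subset hsub).trans_lt <|
          (card_biUnion_lt_iff_forall_of_isRegular hκ ?_).2 fun x _ => hpopular x
        exact (F i).finite_toSet.lt_aleph0.trans_le hκ.aleph0_le
      exact ⟨T, hTS, ∅, hT, hdisj⟩

theorem exists_delta_system (hκ : κ.IsRegular) (hκ₀ : ℵ₀ < κ) (F : ι → Finset α) {S : Set ι}
    (hS : κ ≤ #S) : ∃ T ⊆ S, ∃ R, κ ≤ #T ∧ T.Pairwise fun i j => F i ∩ F j = R := by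
  let c : S → ULift.{u} ℕ := fun i => ⟨(F i).card⟩
  obtain ⟨⟨n⟩, hn⟩ := infinite_pigeonhole_card c κ hS hκ.aleph0_le
    (by rwa [mk_uLift, mk_nat, lift_aleph0, hκ.cof_ord])
  obtain ⟨T, hTS, R, hT, hR⟩ := exists_delta_system_of_card_le hκ n F
    (S := Subtype.val '' (c ⁻¹' {⟨n⟩})) (by rwa [mk_image_eq Subtype.val_injective])
    (by rintro _ ⟨i, hi, rfl⟩; exact (ULift.up_injective hi).le)
  exact ⟨T, hTS.trans (image_subset_iff.2 fun i _ => i.2), R, hT, hR⟩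

end Cardinal

namespace LevyColl

variable {κ : Cardinal.{u}}

noncomputable def dom (p : LevyColl κ) : Finset (κ.ord.ToType × ℕ) := p.1.image Prod.fst

def Agree (p q : LevyColl κ) : Prop :=
  ∀ x ∈ p.1, ∀ y ∈ q.1, x.1 = y.1 → x = y

noncomputable def restrict (p : LevyColl κ) (R : Finset (κ.ord.ToType × ℕ)) :
    Finset ((κ.ord.ToType × ℕ) × κ.ord.ToType) :=
  p.1.filter (·.1 ∈ R)

theorem exists_le_le_of_agree {p q : LevyColl κ} (h : p.Agree q) :
    ∃ r : LevyColl κ, r ≤ p ∧ r ≤ q := by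
  refine ⟨⟨p.1 ∪ q.1, ?_, ?_⟩, Finset.subset_union_left, Finset.subset_union_right⟩
  · intro x hx y hy hxy
    rcases Finset.mem_union.1 hx with hx | hx <;> rcases Finset.mem_union.1 hy with hy | hy
    · exact p.2.1 x hx y hy hxy
    · exact h x hx y hy hxy
    · exact (h y hy x hx hxy.symm).symm
    · exact q.2.1 x hx y hy hxy
  · intro x hx
    rcases Finset.mem_union.1 hx with hx | hx
    exacts [p.2.2 x hx, q.2.2 x hx]

theorem agree_of_restrict_eq {p q : LevyColl κ} {R : Finset (κ.ord.ToType × ℕ)}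
    (hR : p.dom ∩ q.dom ⊆ R) (hpq : p.restrict R = q.restrict R) : p.Agree q := by
  intro x hx y hy hxy
  have hxR : x.1 ∈ R := hR <| Finset.mem_inter.2
    ⟨Finset.mem_image_of_mem _ hx, hxy ▸ Finset.mem_image_of_mem _ hy⟩
  have hxq : x ∈ q.restrict R := hpq ▸ Finset.mem_filter.2 ⟨hx, hxR⟩
  exact q.2.1 x (Finset.mem_filter.1 hxq).1 y hy hxy

theorem mk_range_restrict_lt (hκ : κ.IsRegular) (R : Finset (κ.ord.ToType × ℕ)) :
    #(range fun p : LevyColl κ => p.restrict R) < κ := by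
  set X : Set ((κ.ord.ToType × ℕ) × κ.ord.ToType) := ⋃ k ∈ (R : Set _), Prod.mk k '' Iio k.1
  have hX : #X < κ :=
    (card_biUnion_lt_iff_forall_of_isRegular hκ (R.finite_toSet.lt_aleph0.trans_le hκ.aleph0_le)).2
      fun k _ => mk_image_le.trans_lt (by simpa using mk_Iio_lt k.1)
  refine (mk_le_mk_of_subset ?_).trans_lt (mk_setOf_finset_coe_subset_lt hκ.aleph0_le hX)
  rintro _ ⟨p, rfl⟩ z hz
  obtain ⟨hzp, hzR⟩ := Finset.mem_filter.1 hz
  exact mem_biUnion hzR ⟨z.2, p.2.2 z hzp, rfl⟩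

end LevyColl

/-- The Levy collapse `Coll(ω, <κ)` has the κ-chain condition for κ inaccessible:
every antichain (set of pairwise incompatible conditions) has size less than κ. -/
theorem stmt14 (κ : Cardinal.{u}) (hκ : κ.IsInaccessible)
    (A : Set (LevyColl κ))
    (hA : ∀ p ∈ A, ∀ q ∈ A, p ≠ q → ¬ ∃ r : LevyColl κ, r ≤ p ∧ r ≤ q) :
    Cardinal.mk A < κ := by
  by_contra! hA_large
  obtain ⟨T, hTA, R, hT, hΔ⟩ :=
    exists_delta_system hκ.isRegular hκ.aleph0_lt LevyColl.dom hA_large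
  obtain ⟨p, q, hres, hne⟩ := Function.not_injective_iff.1 fun hinj : Function.Injective
      fun p : T => (⟨_, mem_range_self p.1⟩ : range fun p : LevyColl κ => p.restrict R) =>
    (hT.trans (mk_le_of_injective hinj)).not_gt <|
      LevyColl.mk_range_restrict_lt hκ.isRegular R
  have hpq : (p : LevyColl κ) ≠ q := Subtype.coe_ne_coe.2 hne
  exact hA p (hTA p.2) q (hTA q.2) hpq <| LevyColl.exists_le_le_of_agree <|
    LevyColl.agree_of_restrict_eq (hΔ p.2 q.2 hpq).le (congrArg Subtype.val hres)
end
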